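/- arXiv:1503.04894 — 4 statements merged into one kernel-verified Lean document; each statement's English description precedes it below -/
import Mathlib

section
/- Let μ > 0, and let r, g : I → ℝ² be differentiable functions on an interval I with r(t) ≠ 0 for all t, satisfying ṙ(t) = g(t) and ġ(t) = u(t) g(t)^⊥, where g^⊥ is the counterclockwise rotation of g by π/2 and the control is the motion camouflage law u(t) = −μ (r(t)·g(t)^⊥)/|r(t)|. Define the scalar shape variables ρ(t) = |r(t)|, γ(t) = (r(t)·g(t))/|r(t)|, λ(t) = (r(t)·g(t)^⊥)/|r(t)|, and let δ = |g| (which is constant along the dynamics). Then ρ̇(t) = γ(t) and γ̇(t) = (1/ρ(t) − μ)(δ² − γ(t)²) for all t ∈ I. -/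
open scoped RealInnerProductSpace

/-- Counterclockwise rotation of a planar vector by `π/2`. -/
def perp (v : EuclideanSpace ℝ (Fin 2)) : EuclideanSpace ℝ (Fin 2) :=
  WithLp.toLp 2 ![-v 1, v 0]

section RadialMotion

variable {E : Type*} [NormedAddCommGroup E] [InnerProductSpace ℝ E] {t : ℝ}

theorem HasDerivAt.norm_of_ne_zero {f : ℝ → E} {f' : E} (hf : HasDerivAt f f' t)
    (h0 : f t ≠ 0) : HasDerivAt (‖f ·‖) (⟪f t, f'⟫ / ‖f t‖) t := by
  have hsq : HasDerivAt (fun s => √(‖f s‖ ^ 2)) (2 * ⟪f t, f'⟫ / (2 * √(‖f t‖ ^ 2))) t :=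
    hf.norm_sq.sqrt (pow_ne_zero 2 (norm_ne_zero_iff.mpr h0))
  simp only [Real.sqrt_sq (norm_nonneg _)] at hsq
  convert hsq using 1
  field_simp

theorem hasDerivAt_inner_div_norm {r g : ℝ → E} {a : E} (hr : HasDerivAt r (g t) t)
    (hg : HasDerivAt g a t) (h0 : r t ≠ 0) :
    HasDerivAt (fun s => ⟪r s, g s⟫ / ‖r s‖)
      ((⟪r t, a⟫ + ‖g t‖ ^ 2 - (⟪r t, g t⟫ / ‖r t‖) ^ 2) / ‖r t‖) t := by
  have hnorm : ‖r t‖ ≠ 0 := norm_ne_zero_iff.mpr h0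
  refine ((hr.inner ℝ hg).div (hr.norm_of_ne_zero h0) hnorm).congr_deriv ?_
  rw [real_inner_self_eq_norm_sq]
  field_simp

end RadialMotion

theorem sq_inner_add_sq_inner_perp (x y : EuclideanSpace ℝ (Fin 2)) :
    ⟪x, y⟫ ^ 2 + ⟪x, perp y⟫ ^ 2 = ‖x‖ ^ 2 * ‖y‖ ^ 2 := by
  simp only [← real_inner_self_eq_norm_sq, PiLp.inner_apply, Fin.sum_univ_two, perp,
    RCLike.inner_apply, conj_trivial, Matrix.cons_val_zero, Matrix.cons_val_one,
    Matrix.cons_val_fin_one]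
  ring

theorem mmc_reduced_dynamics_general
    (μ : ℝ) (I : Set ℝ)
    (r g : ℝ → EuclideanSpace ℝ (Fin 2)) (u : ℝ → ℝ) (δ : ℝ)
    (hr0 : ∀ t ∈ I, r t ≠ 0)
    (hu : ∀ t ∈ I, u t = -μ * (⟪r t, perp (g t)⟫ / ‖r t‖))
    (hr : ∀ t ∈ I, HasDerivAt r (g t) t)
    (hg : ∀ t ∈ I, HasDerivAt g (u t • perp (g t)) t)
    (hδ : ∀ t ∈ I, ‖g t‖ = δ) :
    ∀ t ∈ I,
      HasDerivAt (fun s => ‖r s‖) (⟪r t, g t⟫ / ‖r t‖) t ∧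
      HasDerivAt (fun s => ⟪r s, g s⟫ / ‖r s‖)
        ((1 / ‖r t‖ - μ) * (δ ^ 2 - (⟪r t, g t⟫ / ‖r t‖) ^ 2)) t := by
  intro t ht
  refine ⟨(hr t ht).norm_of_ne_zero (hr0 t ht), ?_⟩
  convert hasDerivAt_inner_div_norm (hr t ht) (hg t ht) (hr0 t ht) using 1
  have hnorm : ‖r t‖ ≠ 0 := norm_ne_zero_iff.mpr (hr0 t ht)
  -- `γ² + λ² = δ²` turns the control term `⟪r, u g^⊥⟫ / ρ = -μ λ²` into `-μ (δ² - γ²)`.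
  have hplanar := sq_inner_add_sq_inner_perp (r t) (g t)
  rw [hδ t ht] at hplanar
  rw [hu t ht, real_inner_smul_right, hδ t ht]
  field_simp
  linear_combination (μ * ‖r t‖) * hplanar

/-- Reduction of the planar motion camouflage dynamics to the scalar shape variables:
for `r' = g`, `g' = u • g^⊥` with the motion camouflage feedback
`u = -μ ⟪r, g^⊥⟫ / ‖r‖`, the shape variables `ρ = ‖r‖` and `γ = ⟪r, g⟫ / ‖r‖`
satisfy `ρ' = γ` and `γ' = (1/ρ - μ) (δ² - γ²)`, where `δ = ‖g‖` is constant. -/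
theorem mmc_reduced_dynamics
    (μ : ℝ) (hμ : 0 < μ) (I : Set ℝ) (hI : I.OrdConnected)
    (r g : ℝ → EuclideanSpace ℝ (Fin 2)) (u : ℝ → ℝ) (δ : ℝ)
    (hr0 : ∀ t ∈ I, r t ≠ 0)
    (hu : ∀ t ∈ I, u t = -μ * (⟪r t, perp (g t)⟫ / ‖r t‖))
    (hr : ∀ t ∈ I, HasDerivAt r (g t) t)
    (hg : ∀ t ∈ I, HasDerivAt g (u t • perp (g t)) t)
    (hδ : ∀ t ∈ I, ‖g t‖ = δ) :
    ∀ t ∈ I,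
      HasDerivAt (fun s => ‖r s‖) (⟪r t, g t⟫ / ‖r t‖) t ∧
      HasDerivAt (fun s => ⟪r s, g s⟫ / ‖r s‖)
        ((1 / ‖r t‖ - μ) * (δ ^ 2 - (⟪r t, g t⟫ / ‖r t‖) ^ 2)) t :=
  mmc_reduced_dynamics_general μ I r g u δ hr0 hu hr hg hδ
end

section
/- Let μ > 0 and δ ≥ 0, and let (ρ, γ) : I → ℝ² be a differentiable solution of the reduced mutual motion camouflage dynamics ρ̇(t) = γ(t), γ̇(t) = (1/ρ(t) − μ)(δ² − γ(t)²) with ρ(t) > 0 on the interval I. Then the quantity E(ρ(t), γ(t)) = ρ(t)² (δ² − γ(t)²) e^{−2μρ(t)} is constant along the solution; i.e., E(ρ(t), γ(t)) = E(ρ(0), γ(0)) for all t ∈ I. -/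
/-! Along the flow, `d/dt log E = 2γ/ρ - 2γγ̇/(δ² - γ²) - 2μγ = 2γ(1/ρ - μ) - 2γ(1/ρ - μ) = 0`.
With the logarithm cleared, `Ė = 2ρ e^{-2μρ} ((1 - μρ)(δ² - γ²) ρ̇ - ργγ̇)`, which vanishes along
the flow also where `γ² = δ²`; a function with zero derivative on an interval is constant. -/

open Real

theorem Set.OrdConnected.eq_of_hasDerivAt_eq_zero {E : Type*} [NormedAddCommGroup E]
    [NormedSpace ℝ E] {s : Set ℝ} {f : ℝ → E} (hs : s.OrdConnected)
    (hf : ∀ t ∈ s, HasDerivAt f 0 t) {a b : ℝ} (ha : a ∈ s) (hb : b ∈ s) : f b = f a := by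
  have h := hs.convex.norm_image_sub_le_of_norm_hasDerivWithin_le (C := 0)
    (fun t ht => (hf t ht).hasDerivWithinAt) (fun _ _ => by simp) ha hb
  simpa [sub_eq_zero] using h

noncomputable def mmcEnergy (μ δ ρ γ : ℝ) : ℝ :=
  ρ ^ 2 * (δ ^ 2 - γ ^ 2) * exp (-2 * μ * ρ)

theorem hasDerivAt_mmcEnergy {μ δ : ℝ} {ρ γ : ℝ → ℝ} {ρ' γ' t : ℝ}
    (hρ : HasDerivAt ρ ρ' t) (hγ : HasDerivAt γ γ' t) :
    HasDerivAt (fun s => mmcEnergy μ δ (ρ s) (γ s))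
      (2 * ρ t * exp (-2 * μ * ρ t) *
        ((1 - μ * ρ t) * (δ ^ 2 - γ t ^ 2) * ρ' - ρ t * γ t * γ')) t := by
  refine (((hρ.pow 2).mul ((hasDerivAt_const t (δ ^ 2)).sub (hγ.pow 2))).mul
    (hρ.const_mul (-2 * μ)).exp).congr_deriv ?_
  simp only [Pi.mul_apply, Pi.sub_apply, Pi.pow_apply]
  ring

theorem mmcEnergy_deriv_along_flow_eq_zero {μ δ ρ γ : ℝ} (hρ : ρ ≠ 0) :
    2 * ρ * exp (-2 * μ * ρ) *
      ((1 - μ * ρ) * (δ ^ 2 - γ ^ 2) * γ - ρ * γ * ((1 / ρ - μ) * (δ ^ 2 - γ ^ 2))) = 0 := by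
  field_simp
  ring

theorem mmc_reduced_conserved_general
    (μ δ : ℝ)
    (I : Set ℝ) (hI : I.OrdConnected) (h0I : (0 : ℝ) ∈ I)
    (ρ γ : ℝ → ℝ)
    (hρpos : ∀ t ∈ I, 0 < ρ t)
    (hρ : ∀ t ∈ I, HasDerivAt ρ (γ t) t)
    (hγ : ∀ t ∈ I, HasDerivAt γ ((1 / ρ t - μ) * (δ ^ 2 - γ t ^ 2)) t) :
    ∀ t ∈ I,
      ρ t ^ 2 * (δ ^ 2 - γ t ^ 2) * Real.exp (-2 * μ * ρ t)
        = ρ 0 ^ 2 * (δ ^ 2 - γ 0 ^ 2) * Real.exp (-2 * μ * ρ 0) := by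
  have hE : ∀ t ∈ I, HasDerivAt (fun s => mmcEnergy μ δ (ρ s) (γ s)) 0 t := fun t ht =>
    mmcEnergy_deriv_along_flow_eq_zero (hρpos t ht).ne' ▸ hasDerivAt_mmcEnergy (hρ t ht) (hγ t ht)
  exact fun t ht => hI.eq_of_hasDerivAt_eq_zero hE h0I ht

/-- The quantity `E(ρ, γ) = ρ² (δ² - γ²) e^{-2μρ}` is conserved along any solution of
the reduced mutual motion camouflage dynamics `ρ' = γ`, `γ' = (1/ρ - μ)(δ² - γ²)`
with `ρ > 0` on an interval `I` containing `0`. -/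
theorem mmc_reduced_conserved
    (μ δ : ℝ) (hμ : 0 < μ) (hδ : 0 ≤ δ)
    (I : Set ℝ) (hI : I.OrdConnected) (h0I : (0 : ℝ) ∈ I)
    (ρ γ : ℝ → ℝ)
    (hρpos : ∀ t ∈ I, 0 < ρ t)
    (hρ : ∀ t ∈ I, HasDerivAt ρ (γ t) t)
    (hγ : ∀ t ∈ I, HasDerivAt γ ((1 / ρ t - μ) * (δ ^ 2 - γ t ^ 2)) t) :
    ∀ t ∈ I,
      ρ t ^ 2 * (δ ^ 2 - γ t ^ 2) * Real.exp (-2 * μ * ρ t)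
        = ρ 0 ^ 2 * (δ ^ 2 - γ 0 ^ 2) * Real.exp (-2 * μ * ρ 0) :=
  mmc_reduced_conserved_general μ δ I hI h0I ρ γ hρpos hρ hγ
end

section
/- Let μ > 0 and let r, g : I → ℝ² be differentiable on an interval I with r(t) ≠ 0, satisfying ṙ(t) = g(t) and ġ(t) = u(t) g(t)^⊥ with the motion camouflage feedback u(t) = −μ (r(t)·g(t)^⊥)/|r(t)|, where g^⊥ denotes counterclockwise rotation of g by π/2. Then the quantity E(t) = |r(t)|² ( |g(t)|² − ((r(t)·g(t))/|r(t)|)² ) e^{−2μ|r(t)|} is constant along the solution. -/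
/-!
With `w = ⟪r, g^⊥⟫` and `ρ = ‖r‖`, the Lagrange identity `⟪r, g^⊥⟫² = ‖r‖²‖g‖² - ⟪r, g⟫²`
turns the quantity into `(w e^{-μρ})²`. Along the flow `w' = ⟪g, g^⊥⟫ + u ⟪r, g^⊥⊥⟫ = -u ⟪r, g⟫`,
and the feedback law makes this `μ ρ' w` since `ρ' = ⟪r, g⟫ / ρ`; so `e^{-μρ}` is an integrating
factor and `w e^{-μρ}` has zero derivative on the interval.
-/

open scoped RealInnerProductSpace

open Real

theorem HasDerivAt.norm_of_ne_zero_s8 {F : Type*} [NormedAddCommGroup F] [InnerProductSpace ℝ F]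
    {f : ℝ → F} {f' : F} {x : ℝ} (hf : HasDerivAt f f' x) (h0 : f x ≠ 0) :
    HasDerivAt (‖f ·‖) (⟪f x, f'⟫ / ‖f x‖) x := by
  have h := hf.norm_sq.sqrt (by positivity)
  simp only [sqrt_sq (norm_nonneg _)] at h
  convert h using 1
  field_simp

theorem Set.OrdConnected.eq_of_hasDerivAt_eq_zero_s8 {I : Set ℝ} (hI : I.OrdConnected) {f : ℝ → ℝ}
    (hf : ∀ t ∈ I, HasDerivAt f 0 t) {s t : ℝ} (hs : s ∈ I) (ht : t ∈ I) : f s = f t := by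
  have h := Convex.norm_image_sub_le_of_norm_hasDerivWithin_le
    (fun x hx => (hf x hx).hasDerivWithinAt) (fun _ _ => norm_zero.le) hI.convex ht hs
  rwa [zero_mul, norm_le_zero_iff, sub_eq_zero] at h

theorem hasDerivAt_mul_exp_neg_mul_eq_zero {w ρ : ℝ → ℝ} {c ρ' t : ℝ}
    (hw : HasDerivAt w (c * ρ' * w t) t) (hρ : HasDerivAt ρ ρ' t) :
    HasDerivAt (fun τ => w τ * exp (-c * ρ τ)) 0 t :=
  (hw.mul (hρ.const_mul (-c)).exp).congr_deriv (by ring)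

@[simp]
theorem perp_apply_zero (v : EuclideanSpace ℝ (Fin 2)) : perp v 0 = -v 1 := rfl

@[simp]
theorem perp_apply_one (v : EuclideanSpace ℝ (Fin 2)) : perp v 1 = v 0 := rfl

noncomputable def perpL : EuclideanSpace ℝ (Fin 2) →L[ℝ] EuclideanSpace ℝ (Fin 2) :=
  LinearMap.toContinuousLinearMap
    { toFun := perp
      map_add' := fun v w => by ext i; fin_cases i <;> simp [add_comm]
      map_smul' := fun c v => by ext i; fin_cases i <;> simp }

theorem perp_smul (c : ℝ) (v : EuclideanSpace ℝ (Fin 2)) : perp (c • v) = c • perp v :=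
  perpL.map_smul c v

theorem perp_perp (v : EuclideanSpace ℝ (Fin 2)) : perp (perp v) = -v := by
  ext i; fin_cases i <;> simp

theorem EuclideanSpace.inner_fin_two (v w : EuclideanSpace ℝ (Fin 2)) :
    ⟪v, w⟫ = v 0 * w 0 + v 1 * w 1 := by
  simp [PiLp.inner_apply, Fin.sum_univ_two, mul_comm]

theorem inner_perp_self (v : EuclideanSpace ℝ (Fin 2)) : ⟪v, perp v⟫ = 0 := by
  rw [EuclideanSpace.inner_fin_two, perp_apply_zero, perp_apply_one]; ring

theorem inner_perp_sq (v w : EuclideanSpace ℝ (Fin 2)) :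
    ⟪v, perp w⟫ ^ 2 = ‖v‖ ^ 2 * ‖w‖ ^ 2 - ⟪v, w⟫ ^ 2 := by
  simp only [← real_inner_self_eq_norm_sq, EuclideanSpace.inner_fin_two, perp_apply_zero, perp_apply_one]
  ring

theorem HasDerivAt.perp {f : ℝ → EuclideanSpace ℝ (Fin 2)} {f' : EuclideanSpace ℝ (Fin 2)}
    {t : ℝ} (hf : HasDerivAt f f' t) : HasDerivAt (fun τ => _root_.perp (f τ)) (_root_.perp f') t :=
  perpL.hasFDerivAt.comp_hasDerivAt t hf

theorem hasDerivAt_inner_perp_of_hasDerivAt_perp {r g : ℝ → EuclideanSpace ℝ (Fin 2)} {u t : ℝ}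
    (hr : HasDerivAt r (g t) t) (hg : HasDerivAt g (u • perp (g t)) t) :
    HasDerivAt (fun τ => ⟪r τ, perp (g τ)⟫) (-u * ⟪r t, g t⟫) t := by
  have h := hr.inner ℝ hg.perp
  rwa [inner_perp_self, perp_smul, perp_perp, inner_smul_right, inner_neg_right, add_zero,
    ← neg_mul_comm] at h

theorem sq_norm_mul_sub_mul_exp_eq_sq (c : ℝ) {v w : EuclideanSpace ℝ (Fin 2)} (hv : v ≠ 0) :
    ‖v‖ ^ 2 * (‖w‖ ^ 2 - (⟪v, w⟫ / ‖v‖) ^ 2) * exp (-2 * c * ‖v‖)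
      = (⟪v, perp w⟫ * exp (-c * ‖v‖)) ^ 2 := by
  rw [mul_pow, inner_perp_sq, ← exp_nat_mul]
  field_simp
  ring_nf

theorem mmc_conserved_quantity_general
    (μ : ℝ) (I : Set ℝ) (hI : I.OrdConnected)
    (r g : ℝ → EuclideanSpace ℝ (Fin 2)) (u : ℝ → ℝ)
    (hr0 : ∀ t ∈ I, r t ≠ 0)
    (hu : ∀ t ∈ I, u t = -μ * (⟪r t, perp (g t)⟫ / ‖r t‖))
    (hr : ∀ t ∈ I, HasDerivAt r (g t) t)
    (hg : ∀ t ∈ I, HasDerivAt g (u t • perp (g t)) t) :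
    ∀ s ∈ I, ∀ t ∈ I,
      ‖r s‖ ^ 2 * (‖g s‖ ^ 2 - (⟪r s, g s⟫ / ‖r s‖) ^ 2) * Real.exp (-2 * μ * ‖r s‖)
        = ‖r t‖ ^ 2 * (‖g t‖ ^ 2 - (⟪r t, g t⟫ / ‖r t‖) ^ 2)
            * Real.exp (-2 * μ * ‖r t‖) := by
  have stationary : ∀ t ∈ I,
      HasDerivAt (fun τ => ⟪r τ, perp (g τ)⟫ * exp (-μ * ‖r τ‖)) 0 t := by
    intro t ht
    refine hasDerivAt_mul_exp_neg_mul_eq_zero ?_ ((hr t ht).norm_of_ne_zero_s8 (hr0 t ht))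
    refine (hasDerivAt_inner_perp_of_hasDerivAt_perp (hr t ht) (hg t ht)).congr_deriv ?_
    rw [hu t ht]
    ring
  intro s hs t ht
  rw [sq_norm_mul_sub_mul_exp_eq_sq μ (hr0 s hs), sq_norm_mul_sub_mul_exp_eq_sq μ (hr0 t ht),
    hI.eq_of_hasDerivAt_eq_zero_s8 stationary hs ht]

/-- Along any solution of the planar mutual motion camouflage dynamics `r' = g`,
`g' = u • g^⊥` with feedback `u = -μ ⟪r, g^⊥⟫ / ‖r‖`, the quantity
`E = ‖r‖² (‖g‖² - (⟪r, g⟫/‖r‖)²) e^{-2μ‖r‖}` is constant. -/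
theorem mmc_conserved_quantity
    (μ : ℝ) (hμ : 0 < μ) (I : Set ℝ) (hI : I.OrdConnected)
    (r g : ℝ → EuclideanSpace ℝ (Fin 2)) (u : ℝ → ℝ)
    (hr0 : ∀ t ∈ I, r t ≠ 0)
    (hu : ∀ t ∈ I, u t = -μ * (⟪r t, perp (g t)⟫ / ‖r t‖))
    (hr : ∀ t ∈ I, HasDerivAt r (g t) t)
    (hg : ∀ t ∈ I, HasDerivAt g (u t • perp (g t)) t) :
    ∀ s ∈ I, ∀ t ∈ I,
      ‖r s‖ ^ 2 * (‖g s‖ ^ 2 - (⟪r s, g s⟫ / ‖r s‖) ^ 2) * Real.exp (-2 * μ * ‖r s‖)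
        = ‖r t‖ ^ 2 * (‖g t‖ ^ 2 - (⟪r t, g t⟫ / ‖r t‖) ^ 2)
            * Real.exp (-2 * μ * ‖r t‖) :=
  mmc_conserved_quantity_general μ I hI r g u hr0 hu hr hg
end

section
/- Let ν₁, ν₂ : ℝ → ℝ be continuous with ν₁(t) − ν₂(t) ≠ 0, and let (ρ, ψ) : [0, T) → ℝ² be a differentiable solution of ρ̇(t) = (ν₁(t) − ν₂(t)) cos ψ(t), ψ̇(t) = −(1/ρ(t))(ν₁(t) − ν₂(t)) sin ψ(t) with ρ continuous and positive. If ρ(0) > 0 and 0 < ψ(0) < π, then ρ(t) > 0 and 0 < ψ(t) < π for all t ∈ [0, T); i.e., the region {ρ > 0, 0 < ψ < π} is positively invariant under the restricted dynamics. -/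
/-!
The quantity `ρ sin ψ` is a first integral of the dynamics, so for `ρ > 0` the sign of `sin ψ`
never changes along a solution. Hence `ψ` stays away from `0` and `π`, and by continuity it
cannot leave the interval `(0, π)` it starts in.
-/

open Real Set

theorem hasDerivAt_mul_sin_eq_zero {ρ ψ : ℝ → ℝ} {a t : ℝ} (hρt : ρ t ≠ 0)
    (hρ : HasDerivAt ρ (a * cos (ψ t)) t)
    (hψ : HasDerivAt ψ (-(1 / ρ t) * a * sin (ψ t)) t) :
    HasDerivAt (fun u => ρ u * sin (ψ u)) 0 t := by
  refine (hρ.mul hψ.sin).congr_deriv ?_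
  field_simp
  ring

theorem Convex.mul_sin_eq_of_hasDerivAt {s : Set ℝ} (hs : Convex ℝ s) {ρ ψ a : ℝ → ℝ}
    (hρs : ∀ t ∈ s, ρ t ≠ 0)
    (hρ : ∀ t ∈ s, HasDerivAt ρ (a t * cos (ψ t)) t)
    (hψ : ∀ t ∈ s, HasDerivAt ψ (-(1 / ρ t) * a t * sin (ψ t)) t)
    {x y : ℝ} (hx : x ∈ s) (hy : y ∈ s) :
    ρ y * sin (ψ y) = ρ x * sin (ψ x) := by
  have hderiv : ∀ t ∈ s, HasDerivWithinAt (fun u => ρ u * sin (ψ u)) 0 s t := fun t ht =>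
    (hasDerivAt_mul_sin_eq_zero (hρs t ht) (hρ t ht) (hψ t ht)).hasDerivWithinAt
  simpa [sub_eq_zero] using
    hs.norm_image_sub_le_of_norm_hasDerivWithin_le hderiv (C := 0) (by simp) hx hy

theorem IsPreconnected.mem_Ioo_of_notMem {s : Set ℝ} (hs : IsPreconnected s) {a b x y : ℝ}
    (ha : a ∉ s) (hb : b ∉ s) (hx : x ∈ s) (hxab : x ∈ Ioo a b) (hy : y ∈ s) :
    y ∈ Ioo a b := by
  by_contra hyab
  rcases not_and_or.mp hyab with hay | hyb
  · exact ha (hs.Icc_subset hy hx ⟨not_lt.mp hay, hxab.1.le⟩)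
  · exact hb (hs.Icc_subset hx hy ⟨hxab.2.le, not_lt.mp hyb⟩)

theorem tva_region_positively_invariant_general
    (ν₁ ν₂ : ℝ → ℝ)
    (T : ℝ) (ρ ψ : ℝ → ℝ)
    (hρpos : ∀ t ∈ Set.Ico (0 : ℝ) T, 0 < ρ t)
    (hρ : ∀ t ∈ Set.Ico (0 : ℝ) T, HasDerivAt ρ ((ν₁ t - ν₂ t) * Real.cos (ψ t)) t)
    (hψ : ∀ t ∈ Set.Ico (0 : ℝ) T,
      HasDerivAt ψ (-(1 / ρ t) * (ν₁ t - ν₂ t) * Real.sin (ψ t)) t)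
    (hρ0 : 0 < ρ 0) (hψ0 : ψ 0 ∈ Set.Ioo 0 Real.pi) :
    ∀ t ∈ Set.Ico (0 : ℝ) T, 0 < ρ t ∧ ψ t ∈ Set.Ioo 0 Real.pi := by
  intro t ht
  have h0 : (0 : ℝ) ∈ Ico 0 T := ⟨le_rfl, ht.1.trans_lt ht.2⟩
  have hsin : ∀ s ∈ Ico (0 : ℝ) T, 0 < sin (ψ s) := fun s hs => by
    have hconserved := (convex_Ico 0 T).mul_sin_eq_of_hasDerivAt
      (fun u hu => (hρpos u hu).ne') hρ hψ h0 hs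
    have hprod : 0 < ρ s * sin (ψ s) :=
      hconserved ▸ mul_pos hρ0 (sin_pos_of_pos_of_lt_pi hψ0.1 hψ0.2)
    exact pos_of_mul_pos_right hprod (hρpos s hs).le
  have hψc : ContinuousOn ψ (Ico 0 T) := fun s hs => (hψ s hs).continuousAt.continuousWithinAt
  have hnotMem : ∀ c, sin c = 0 → c ∉ ψ '' Ico 0 T := by
    rintro c hc ⟨s, hs, rfl⟩
    exact (hsin s hs).ne' hc
  exact ⟨hρpos t ht, (isPreconnected_Ico.image ψ hψc).mem_Ioo_of_notMem (hnotMem 0 sin_zero)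
    (hnotMem π sin_pi) (mem_image_of_mem ψ h0) hψ0 (mem_image_of_mem ψ ht)⟩

/-- Positive invariance of the region `{ρ > 0, 0 < ψ < π}` under the restricted
dynamics `ρ' = (ν₁ - ν₂) cos ψ`, `ψ' = -(1/ρ)(ν₁ - ν₂) sin ψ` on `[0, T)`:
if `ρ 0 > 0` and `0 < ψ 0 < π`, then `ρ t > 0` and `0 < ψ t < π` for all
`t ∈ [0, T)`. -/
theorem tva_region_positively_invariant
    (ν₁ ν₂ : ℝ → ℝ) (hν₁c : Continuous ν₁) (hν₂c : Continuous ν₂)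
    (hνne : ∀ t, ν₁ t - ν₂ t ≠ 0)
    (T : ℝ) (ρ ψ : ℝ → ℝ)
    (hρc : ContinuousOn ρ (Set.Ico 0 T))
    (hρpos : ∀ t ∈ Set.Ico (0 : ℝ) T, 0 < ρ t)
    (hρ : ∀ t ∈ Set.Ico (0 : ℝ) T, HasDerivAt ρ ((ν₁ t - ν₂ t) * Real.cos (ψ t)) t)
    (hψ : ∀ t ∈ Set.Ico (0 : ℝ) T,
      HasDerivAt ψ (-(1 / ρ t) * (ν₁ t - ν₂ t) * Real.sin (ψ t)) t)
    (hT : 0 < T)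
    (hρ0 : 0 < ρ 0) (hψ0 : ψ 0 ∈ Set.Ioo 0 Real.pi) :
    ∀ t ∈ Set.Ico (0 : ℝ) T, 0 < ρ t ∧ ψ t ∈ Set.Ioo 0 Real.pi :=
  tva_region_positively_invariant_general ν₁ ν₂ T ρ ψ hρpos hρ hψ hρ0 hψ0
end
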